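/- Suppose there exist C > 0 and ρ > 0 such that for every n ≥ 1 the closed absolutely convex hull acx(Φ(Ω)) admits an (n, C·n^{−ρ−1/2})-cover. Let β ∈ [0,∞), γ ∈ (0,1], f ∈ H, and let (x_i)_{i≥1} be a weak β-greedy sequence for f with parameter γ. Then for every n ≥ 1: min_{n+1 ≤ i ≤ 2n} ‖r_i‖_∞ ≤ (C·√5)^{1/max(1,β)} · γ^{−1} · (n^{−ρ − β/2})^{1/max(1,β)} · ‖r_{n+1}‖_H. -/

import Mathlib

open scoped RealInnerProductSpace

variable {H : Type*} [NormedAddCommGroup H] [InnerProductSpace ℝ H] {Ω : Type*}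

/-- The kernel interpolant `I_X f`: the orthogonal projection of `f` onto
`V(X) = span {Φ(x) : x ∈ X}`. -/
noncomputable def interp (Φ : Ω → H) (X : Finset Ω) (f : H) : H :=
  haveI : FiniteDimensional ℝ (Submodule.span ℝ (Φ '' (X : Set Ω))) :=
    FiniteDimensional.span_of_finite ℝ (X.finite_toSet.image Φ)
  (Submodule.orthogonalProjectionOnto (Submodule.span ℝ (Φ '' (X : Set Ω))) f : H)

/-- The power function `P_X(z) = ‖Φ(z) − Π_{V(X)} Φ(z)‖`. -/
noncomputable def powerFun (Φ : Ω → H) (X : Finset Ω) (z : Ω) : ℝ :=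
  ‖Φ z - interp Φ X (Φ z)‖

/-- The sup norm `‖g‖_∞ = sup_{x ∈ Ω} |g(x)|`, where `g(x) = ⟪g, Φ(x)⟫`. -/
noncomputable def supNorm (Φ : Ω → H) (g : H) : ℝ := ⨆ x : Ω, |⟪g, Φ x⟫|

/-- `X_i = {x_1, …, x_i}` (so `X_0 = ∅`). -/
noncomputable def Xset (x : ℕ → Ω) (i : ℕ) : Finset Ω := by
  classical exact (Finset.Icc 1 i).image x

/-- `(x_i)_{i ≥ 1}` is a weak β-greedy sequence for `f` with parameter `γ`:
for every `i ≥ 0` and `z ∈ Ω`,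
`γ · |r_i(z)|^β · P_{X_i}(z)^{1−β} ≤ |r_i(x_{i+1})|^β · P_{X_i}(x_{i+1})^{1−β}`,
where `r_i = f − I_{X_i} f`. -/
def IsWeakGreedy (Φ : Ω → H) (f : H) (β γ : ℝ) (x : ℕ → Ω) : Prop :=
  ∀ (i : ℕ) (z : Ω),
    γ * |⟪f - interp Φ (Xset x i) f, Φ z⟫| ^ β * powerFun Φ (Xset x i) z ^ (1 - β)
      ≤ |⟪f - interp Φ (Xset x i) f, Φ (x (i + 1))⟫| ^ β
          * powerFun Φ (Xset x i) (x (i + 1)) ^ (1 - β)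

/-- The closed absolutely convex (symmetric convex) hull of `K`. -/
def acx (K : Set H) : Set H :=
  closure {y : H | ∃ (m : ℕ) (c : Fin m → ℝ) (g : Fin m → H),
    (∀ j, g j ∈ K) ∧ (∑ j, |c j|) ≤ 1 ∧ y = ∑ j, c j • g j}

/-- `S` admits an `(n, ε)`-cover: it can be covered by at most `2^n` closed balls of
radius `ε`. -/
def HasCover (S : Set H) (n : ℕ) (ε : ℝ) : Prop :=
  ∃ (q : ℕ) (y : Fin q → H), q ≤ 2 ^ n ∧ S ⊆ ⋃ j, Metric.closedBall (y j) ε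

/-!
Write `r_i = f - I_{X_i} f` and `P_i = P_{X_i}(x_{i+1})`. The Newton vectors
`w_i = Φ(x_{i+1}) - I_{X_i} Φ(x_{i+1})` have `‖w_i‖ = P_i`, are pairwise orthogonal, satisfy
`⟪w_i, Φ(x_{k+1})⟫ = 0` for `k < i`, and `⟪w_i, r_m⟫ = r_i(x_{i+1})` for `m ≤ i`. With
`v_i = w_i / P_i` the greedy value `|r_i(x_{i+1})|^β P_i^{1-β}` therefore equals `t_i^β P_i`,
where `t_i = |⟪v_i, r_{n+1}⟫|`. Over `n + 1 ≤ i ≤ 2n`, Bessel's inequality and AM-GM give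
`∏ t_i ≤ (‖r_{n+1}‖ / √n)^n`. The product `∏ P_i` is the determinant of the triangular matrix
`(⟪v_i, Φ(x_{k+1})⟫)`, which maps the `ℓ¹` unit ball of `ℝⁿ` into the coordinates of
`acx(Φ(Ω))`; comparing its volume with that of `2^n` Euclidean balls of radius `ε_n` gives
`∏ P_i ≤ (√5 √n ε_n)^n`. So some greedy value is at most `(‖r_{n+1}‖ / √n)^β √5 √n ε_n`, and
the selection inequality turns this into the bound on `‖r_i‖_∞`.
-/

open Real Submodule MeasureTheory Metric

abbrev interpSpace (Φ : Ω → H) (X : Finset Ω) : Submodule ℝ H := span ℝ (Φ '' (X : Set Ω))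

instance (Φ : Ω → H) (X : Finset Ω) : FiniteDimensional ℝ (interpSpace Φ X) :=
  FiniteDimensional.span_of_finite ℝ (X.finite_toSet.image Φ)

section Interpolation

variable (Φ : Ω → H) (X : Finset Ω) (f : H)

lemma interp_eq_starProjection : interp Φ X f = (interpSpace Φ X).starProjection f := rfl

lemma interp_mem : interp Φ X f ∈ interpSpace Φ X := starProjection_apply_mem _ f

lemma sub_interp_mem_orthogonal : f - interp Φ X f ∈ (interpSpace Φ X)ᗮ :=
  sub_starProjection_mem_orthogonal f

variable {Φ X} in
lemma norm_sub_interp_le {w : H} (hw : w ∈ interpSpace Φ X) :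
    ‖f - interp Φ X f‖ ≤ ‖f - w‖ := by
  rw [interp_eq_starProjection, starProjection_minimal]
  exact ciInf_le ⟨0, Set.forall_mem_range.2 fun _ => norm_nonneg _⟩ (⟨w, hw⟩ : interpSpace Φ X)

variable {Φ X} in
lemma abs_inner_le_norm_mul_powerFun {g : H} (hg : g ∈ (interpSpace Φ X)ᗮ) (z : Ω) :
    |⟪g, Φ z⟫| ≤ ‖g‖ * powerFun Φ X z := by
  have : ⟪g, Φ z⟫ = ⟪g, Φ z - interp Φ X (Φ z)⟫ := by
    rw [inner_sub_right, inner_left_of_mem_orthogonal (interp_mem Φ X _) hg, sub_zero]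
  rw [this]
  exact abs_real_inner_le_norm _ _

lemma powerFun_nonneg (z : Ω) : 0 ≤ powerFun Φ X z := norm_nonneg _

variable {Φ} in
lemma powerFun_le_one (hΦ : ∀ z, ‖Φ z‖ ≤ 1) (z : Ω) : powerFun Φ X z ≤ 1 := by
  have h := norm_sub_interp_le (Φ z) (zero_mem (interpSpace Φ X))
  rw [sub_zero] at h
  exact h.trans (hΦ z)

end Interpolation

section GreedySequence

variable (Φ : Ω → H) (x : ℕ → Ω)

lemma interpSpace_Xset_mono {i j : ℕ} (h : i ≤ j) :
    interpSpace Φ (Xset x i) ≤ interpSpace Φ (Xset x j) := by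
  classical
  refine span_mono (Set.image_mono ?_)
  simp only [Xset, Finset.coe_image]
  exact Set.image_mono (by simpa using Set.Icc_subset_Icc_right h)

lemma apply_mem_interpSpace_Xset {k i : ℕ} (hk : 1 ≤ k) (hki : k ≤ i) :
    Φ (x k) ∈ interpSpace Φ (Xset x i) := by
  classical
  refine subset_span ⟨x k, ?_, rfl⟩
  simp only [Xset, Finset.coe_image]
  exact ⟨k, by simp [hk, hki], rfl⟩

lemma norm_sub_interp_Xset_antitone (f : H) {i j : ℕ} (h : i ≤ j) :
    ‖f - interp Φ (Xset x j) f‖ ≤ ‖f - interp Φ (Xset x i) f‖ :=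
  norm_sub_interp_le f (interpSpace_Xset_mono Φ x h (interp_mem Φ _ f))

-- The Newton basis vector of index `i + 1`, not yet normalised.
noncomputable def newtonVec (i : ℕ) : H := Φ (x (i + 1)) - interp Φ (Xset x i) (Φ (x (i + 1)))

lemma norm_newtonVec (i : ℕ) : ‖newtonVec Φ x i‖ = powerFun Φ (Xset x i) (x (i + 1)) := rfl

lemma newtonVec_mem_orthogonal (i : ℕ) : newtonVec Φ x i ∈ (interpSpace Φ (Xset x i))ᗮ :=
  sub_interp_mem_orthogonal Φ _ _

lemma newtonVec_mem (i : ℕ) : newtonVec Φ x i ∈ interpSpace Φ (Xset x (i + 1)) :=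
  sub_mem (apply_mem_interpSpace_Xset Φ x le_add_self le_rfl)
    (interpSpace_Xset_mono Φ x (Nat.le_succ i) (interp_mem Φ _ _))

lemma inner_newtonVec_newtonVec_of_lt {i j : ℕ} (h : i < j) :
    ⟪newtonVec Φ x j, newtonVec Φ x i⟫ = 0 :=
  inner_left_of_mem_orthogonal (interpSpace_Xset_mono Φ x h (newtonVec_mem Φ x i))
    (newtonVec_mem_orthogonal Φ x j)

lemma inner_newtonVec_apply_of_lt {k j : ℕ} (h : k < j) :
    ⟪newtonVec Φ x j, Φ (x (k + 1))⟫ = 0 :=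
  inner_left_of_mem_orthogonal (apply_mem_interpSpace_Xset Φ x le_add_self h)
    (newtonVec_mem_orthogonal Φ x j)

lemma inner_newtonVec_apply_self (i : ℕ) :
    ⟪newtonVec Φ x i, Φ (x (i + 1))⟫ = powerFun Φ (Xset x i) (x (i + 1)) ^ 2 := by
  have h : Φ (x (i + 1)) = newtonVec Φ x i + interp Φ (Xset x i) (Φ (x (i + 1))) :=
    (sub_add_cancel _ _).symm
  rw [← norm_newtonVec, ← real_inner_self_eq_norm_sq]
  conv_lhs => rw [h]
  rw [inner_add_right, inner_left_of_mem_orthogonal (interp_mem Φ _ _)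
    (newtonVec_mem_orthogonal Φ x i), add_zero]

lemma inner_newtonVec_sub_interp (f : H) {j i : ℕ} (h : j ≤ i) :
    ⟪newtonVec Φ x i, f - interp Φ (Xset x j) f⟫ = ⟪f - interp Φ (Xset x i) f, Φ (x (i + 1))⟫ := by
  have hw := newtonVec_mem_orthogonal Φ x i
  have hr := sub_interp_mem_orthogonal Φ (Xset x i) f
  have hsplit : f - interp Φ (Xset x j) f
      = (f - interp Φ (Xset x i) f) + (interp Φ (Xset x i) f - interp Φ (Xset x j) f) := by abel
  rw [hsplit, inner_add_right, inner_left_of_mem_orthogonal (sub_mem (interp_mem Φ _ f)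
    (interpSpace_Xset_mono Φ x h (interp_mem Φ _ f))) hw, add_zero, newtonVec, inner_sub_left,
    inner_right_of_mem_orthogonal (interp_mem Φ _ _) hr, sub_zero, real_inner_comm]

lemma orthonormal_normalized_newtonVec (m n : ℕ)
    (hw : ∀ k : Fin n, newtonVec Φ x (m + k) ≠ 0) :
    Orthonormal ℝ fun k : Fin n => ‖newtonVec Φ x (m + k)‖⁻¹ • newtonVec Φ x (m + k) := by
  classical
  rw [orthonormal_iff_ite]
  intro a b
  rw [real_inner_smul_left, real_inner_smul_right]
  split_ifs with hab
  · subst hab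
    rw [real_inner_self_eq_norm_sq]
    field_simp [norm_ne_zero_iff.2 (hw a)]
  · rcases lt_or_gt_of_ne (Fin.val_injective.ne hab) with h | h
    · rw [real_inner_comm, inner_newtonVec_newtonVec_of_lt Φ x (by omega : m + a < m + b)]
      simp
    · rw [inner_newtonVec_newtonVec_of_lt Φ x (by omega : m + b < m + a)]
      simp

end GreedySequence

-- The inductive step `k → k + 2` of `sq_factorial_mul_pi_pow_le`.
theorem four_mul_sq_mul_pi_sq_mul_pow_le (k : ℕ) :
    4 * ((k : ℝ) + 1) ^ 2 * π ^ 2 * (k : ℝ) ^ k ≤ 25 * ((k : ℝ) + 2) ^ (k + 2) := by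
  have hπ : π ^ 2 < 10 := by nlinarith [pi_lt_d2, pi_pos]
  rcases Nat.eq_zero_or_pos k with rfl | hk
  · norm_num; linarith
  have hk0 : (0 : ℝ) < k := by exact_mod_cast hk
  have bernoulli : 3 * (k : ℝ) ^ k ≤ ((k : ℝ) + 2) ^ k := by
    have h := one_add_mul_le_pow (a := 2 / (k : ℝ)) (by linarith [div_pos two_pos hk0]) k
    rw [mul_div_cancel₀ _ hk0.ne'] at h
    have hpow : ((k : ℝ) + 2) ^ k = (1 + 2 / k) ^ k * (k : ℝ) ^ k := by
      rw [← mul_pow]; congr 1; field_simp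
    rw [hpow]
    nlinarith [pow_pos hk0 k]
  calc 4 * ((k : ℝ) + 1) ^ 2 * π ^ 2 * (k : ℝ) ^ k
      ≤ 25 * ((k : ℝ) + 2) ^ 2 * (3 * (k : ℝ) ^ k) := by
        have : 4 * ((k : ℝ) + 1) ^ 2 * π ^ 2 ≤ 75 * ((k : ℝ) + 2) ^ 2 := by nlinarith
        nlinarith [pow_pos hk0 k]
    _ ≤ 25 * ((k : ℝ) + 2) ^ 2 * ((k : ℝ) + 2) ^ k := by gcongr
    _ = 25 * ((k : ℝ) + 2) ^ (k + 2) := by ring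

theorem sq_factorial_mul_pi_pow_le (n : ℕ) :
    (n.factorial : ℝ) ^ 2 * π ^ n ≤ (5 * n) ^ n * Gamma (n / 2 + 1) ^ 2 := by
  induction n using Nat.twoStepInduction with
  | zero => simp
  | one =>
    rw [Nat.cast_one, Gamma_add_one one_half_pos.ne', Gamma_one_half_eq, mul_pow (1 / 2 : ℝ),
      sq_sqrt pi_nonneg]
    norm_num
    nlinarith [pi_pos]
  | more k ih _ =>
    have hΓ : Gamma (((k + 2 : ℕ) : ℝ) / 2 + 1) = ((k : ℝ) / 2 + 1) * Gamma (k / 2 + 1) := by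
      rw [← Gamma_add_one (by positivity)]; push_cast; ring_nf
    rw [hΓ, Nat.factorial_succ, Nat.factorial_succ, mul_pow (5 : ℝ)]
    push_cast
    set G := Gamma (k / 2 + 1)
    calc (((k : ℝ) + 1 + 1) * (((k : ℝ) + 1) * k.factorial)) ^ 2 * π ^ (k + 2)
        = ((k : ℝ) + 2) ^ 2 * ((k : ℝ) + 1) ^ 2 * π ^ 2 * ((k.factorial : ℝ) ^ 2 * π ^ k) := by
          ring
      _ ≤ ((k : ℝ) + 2) ^ 2 * ((k : ℝ) + 1) ^ 2 * π ^ 2 * (5 ^ k * k ^ k * G ^ 2) := by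
          gcongr _ * ?_
          rwa [← mul_pow]
      _ = 5 ^ k * G ^ 2 * ((k : ℝ) + 2) ^ 2 / 4 * (4 * ((k : ℝ) + 1) ^ 2 * π ^ 2 * (k : ℝ) ^ k) := by
          ring
      _ ≤ 5 ^ k * G ^ 2 * ((k : ℝ) + 2) ^ 2 / 4 * (25 * ((k : ℝ) + 2) ^ (k + 2)) := by
          gcongr _ * ?_
          exact four_mul_sq_mul_pi_sq_mul_pow_le k
      _ = 5 ^ (k + 2) * ((k : ℝ) + 2) ^ (k + 2) * (((k : ℝ) / 2 + 1) * G) ^ 2 := by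
          ring

-- `n! √π^n / Γ(n/2 + 1)` is `2^n` times the ratio of the volumes of the Euclidean and the `ℓ¹`
-- unit balls of `ℝⁿ`; this bound is the source of the constant `√5`.
theorem factorial_mul_sqrt_pi_pow_le (n : ℕ) :
    n.factorial * √π ^ n ≤ (√5 * √n) ^ n * Gamma (n / 2 + 1) := by
  have hΓ : 0 < Gamma (n / 2 + 1) := Gamma_pos_of_pos (by positivity)
  have hl : (n.factorial * √π ^ n) ^ 2 = (n.factorial : ℝ) ^ 2 * π ^ n := by
    rw [mul_pow, ← pow_mul, mul_comm n 2, pow_mul, sq_sqrt pi_nonneg]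
  have hr : ((√5 * √n) ^ n * Gamma (n / 2 + 1)) ^ 2 = (5 * n) ^ n * Gamma (n / 2 + 1) ^ 2 := by
    rw [mul_pow, ← pow_mul, mul_comm n 2, pow_mul, ← sqrt_mul (by norm_num),
      sq_sqrt (by positivity)]
  rw [← pow_le_pow_iff_left₀ (by positivity) (by positivity) two_ne_zero, hl, hr]
  exact sq_factorial_mul_pi_pow_le n

theorem volume_crossPolytope (n : ℕ) [NeZero n] :
    volume {c : EuclideanSpace ℝ (Fin n) | ∑ i, |c i| ≤ 1}
      = ENNReal.ofReal (2 ^ n / n.factorial) := by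
  have hmeas : MeasurableSet {c : EuclideanSpace ℝ (Fin n) | ∑ i, |c i| ≤ 1} :=
    (isClosed_le (by fun_prop) continuous_const).measurableSet
  rw [← (PiLp.volume_preserving_toLp (Fin n)).measure_preimage hmeas.nullMeasurableSet]
  have h := volume_sum_rpow_le (ι := Fin n) le_rfl 1
  simp only [Real.rpow_one, div_one, Fintype.card_fin, ENNReal.ofReal_one, one_pow,
    one_mul] at h
  rw [one_add_one_eq_two, Real.Gamma_two, Real.Gamma_nat_eq_factorial] at h
  simpa using h

theorem ofReal_abs_det_mul_measure_le {E : Type*} [NormedAddCommGroup E] [NormedSpace ℝ E]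
    [MeasurableSpace E] [BorelSpace E] [FiniteDimensional ℝ E] (μ : Measure E)
    [μ.IsAddHaarMeasure] (L : E →ₗ[ℝ] E) {S : Set E} {q : ℕ} {y : Fin q → E} {ε : ℝ}
    (hS : L '' S ⊆ ⋃ j, closedBall (y j) ε) :
    ENNReal.ofReal |LinearMap.det L| * μ S ≤ q * μ (closedBall 0 ε) := by
  rw [← Measure.addHaar_image_linearMap]
  calc μ (L '' S) ≤ μ (⋃ j, closedBall (y j) ε) := measure_mono hS
    _ ≤ ∑ j, μ (closedBall (y j) ε) := measure_iUnion_fintype_le μ _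
    _ = q * μ (closedBall 0 ε) := by
      simp [Measure.addHaar_closedBall_center]

theorem abs_det_le_of_image_crossPolytope_subset {n q : ℕ} [NeZero n] (hq : q ≤ 2 ^ n)
    {A : Matrix (Fin n) (Fin n) ℝ} {y : Fin q → EuclideanSpace ℝ (Fin n)} {ε : ℝ} (hε : 0 ≤ ε)
    (hA : Matrix.toEuclideanLin A '' {c | ∑ i, |c i| ≤ 1} ⊆ ⋃ j, closedBall (y j) ε) :
    |A.det| ≤ (√5 * √n * ε) ^ n := by
  have hvol := ofReal_abs_det_mul_measure_le volume _ hA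
  rw [Matrix.toEuclideanLin_eq_toLin_orthonormal, LinearMap.det_toLin, volume_crossPolytope,
    EuclideanSpace.volume_closedBall, Fintype.card_fin, ← ENNReal.ofReal_pow hε,
    ← ENNReal.ofReal_mul (by positivity), ← ENNReal.ofReal_natCast,
    ← ENNReal.ofReal_mul (by positivity), ← ENNReal.ofReal_mul (by positivity),
    ENNReal.ofReal_le_ofReal_iff (by positivity)] at hvol
  have hq' : (q : ℝ) ≤ 2 ^ n := by exact_mod_cast hq
  have hfac : (0 : ℝ) < n.factorial := by exact_mod_cast n.factorial_pos
  have hΓ : 0 < Gamma (n / 2 + 1) := Gamma_pos_of_pos (by positivity)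
  calc |A.det| = |A.det| * (2 ^ n / n.factorial) * (n.factorial / 2 ^ n) := by field_simp
    _ ≤ 2 ^ n * (ε ^ n * (√π ^ n / Gamma (n / 2 + 1))) * (n.factorial / 2 ^ n) := by
        gcongr ?_ * _
        exact hvol.trans (by gcongr)
    _ = ε ^ n * (n.factorial * √π ^ n / Gamma (n / 2 + 1)) := by field_simp
    _ ≤ ε ^ n * (√5 * √n) ^ n := by
        gcongr
        rw [div_le_iff₀ hΓ]
        exact factorial_mul_sqrt_pi_pow_le n
    _ = (√5 * √n * ε) ^ n := by ring

noncomputable def innerCoords {n : ℕ} (v : Fin n → H) : H →ₗ[ℝ] EuclideanSpace ℝ (Fin n) :=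
  (WithLp.linearEquiv 2 ℝ (Fin n → ℝ)).symm.toLinearMap ∘ₗ
    LinearMap.pi fun j => innerₛₗ ℝ (v j)

@[simp]
lemma innerCoords_apply {n : ℕ} (v : Fin n → H) (h : H) (j : Fin n) :
    innerCoords v h j = ⟪v j, h⟫ := rfl

lemma Orthonormal.norm_innerCoords_le {n : ℕ} {v : Fin n → H} (hv : Orthonormal ℝ v) (h : H) :
    ‖innerCoords v h‖ ≤ ‖h‖ := by
  rw [← pow_le_pow_iff_left₀ (norm_nonneg _) (norm_nonneg _) two_ne_zero,
    EuclideanSpace.norm_sq_eq]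
  simpa using hv.sum_inner_products_le (s := Finset.univ) h

theorem prod_abs_inner_le_of_hasCover {n : ℕ} [NeZero n] {K : Set H} {ε : ℝ} (hε : 0 ≤ ε)
    (hcov : HasCover (acx K) n ε) {u v : Fin n → H} (hu : ∀ k, u k ∈ K)
    (hv : Orthonormal ℝ v) (htri : ∀ j k, k < j → ⟪v j, u k⟫ = 0) :
    ∏ k, |⟪v k, u k⟫| ≤ (√5 * √n * ε) ^ n := by
  obtain ⟨q, y, hq, hcover⟩ := hcov
  set A : Matrix (Fin n) (Fin n) ℝ := Matrix.of fun i j => ⟪v i, u j⟫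
  have hdet : A.det = ∏ k, ⟪v k, u k⟫ :=
    Matrix.det_of_isUpperTriangular fun i j hij => htri i j hij
  have hA : ∀ c, Matrix.toEuclideanLin A c = innerCoords v (∑ j, c j • u j) := by
    intro c; ext i
    simp [A, Matrix.mulVec, dotProduct, mul_comm]
  rw [← Finset.abs_prod, ← hdet]
  refine abs_det_le_of_image_crossPolytope_subset hq hε (y := fun j => innerCoords v (y j)) ?_
  rintro _ ⟨c, hc, rfl⟩
  obtain ⟨_, ⟨j, rfl⟩, hj⟩ := hcover (subset_closure ⟨n, fun i => c i, u, hu, hc, rfl⟩)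
  refine Set.mem_iUnion.2 ⟨j, ?_⟩
  rw [mem_closedBall, dist_eq_norm, hA, ← map_sub] at *
  exact (hv.norm_innerCoords_le _).trans hj

theorem prod_le_of_sum_sq_le {n : ℕ} {t : Fin n → ℝ} (ht : ∀ k, 0 ≤ t k) {R : ℝ} (hR : 0 ≤ R)
    (h : ∑ k, t k ^ 2 ≤ R ^ 2) : ∏ k, t k ≤ (R / √n) ^ n := by
  rcases Nat.eq_zero_or_pos n with rfl | hn
  · simp
  have hn' : (0 : ℝ) < n := by exact_mod_cast hn
  have amgm := geom_mean_le_arith_mean Finset.univ (fun _ => (1 : ℝ)) (fun k => t k ^ 2)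
    (fun _ _ => zero_le_one) (by simpa using hn) (fun k _ => sq_nonneg (t k))
  simp only [rpow_one, Finset.sum_const, Finset.card_univ, Fintype.card_fin, nsmul_eq_mul,
    mul_one, one_mul] at amgm
  have hsq : (∏ k, t k ^ 2) ≤ (R ^ 2 / n) ^ n := by
    have h0 : 0 ≤ ∏ k, t k ^ 2 := by positivity
    rw [← rpow_inv_natCast_pow h0 hn.ne']
    gcongr
    exact amgm.trans (by gcongr)
  rw [← pow_le_pow_iff_left₀ (Finset.prod_nonneg fun k _ => ht k) (by positivity) two_ne_zero,
    ← Finset.prod_pow,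
    ← pow_mul, mul_comm n 2, pow_mul, div_pow, sq_sqrt hn'.le]
  exact hsq

theorem exists_le_of_prod_le_pow {n : ℕ} [NeZero n] {f : Fin n → ℝ} (hf : ∀ k, 0 ≤ f k) {A : ℝ}
    (hA : 0 ≤ A) (h : ∏ k, f k ≤ A ^ n) : ∃ k, f k ≤ A := by
  obtain ⟨k, -, hk⟩ := Finset.exists_min_image Finset.univ f Finset.univ_nonempty
  refine ⟨k, le_of_pow_le_pow_left₀ (NeZero.ne n) hA ?_⟩
  calc f k ^ n = ∏ _j : Fin n, f k := by simp
    _ ≤ ∏ j, f j := Finset.prod_le_prod (fun _ _ => hf k) fun j _ => hk j (Finset.mem_univ j)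
    _ ≤ A ^ n := h

theorem le_of_greedy_ineq_of_le_one {a p s R m β γ : ℝ} (ha : 0 ≤ a) (hp : 0 ≤ p) (hs : 0 ≤ s)
    (has : a ≤ s * p) (hsR : s ≤ R) (hβ1 : β ≤ 1) (hγ : 0 < γ)
    (hm : γ * a ^ β * p ^ (1 - β) ≤ m) :
    a ≤ γ⁻¹ * m * R ^ (1 - β) := by
  have hm0 : 0 ≤ m := (by positivity : 0 ≤ γ * a ^ β * p ^ (1 - β)).trans hm
  have hR : 0 ≤ R := hs.trans hsR
  rcases ha.eq_or_lt with rfl | ha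
  · positivity
  have hs0 : 0 < s := pos_of_mul_pos_left (ha.trans_le has) hp
  have hsp : (a / s) ^ (1 - β) ≤ p ^ (1 - β) :=
    rpow_le_rpow (by positivity) ((div_le_iff₀' hs0).2 has) (by linarith)
  have hsplit : a ^ β * (a / s) ^ (1 - β) = a / s ^ (1 - β) := by
    rw [div_rpow ha.le hs, ← mul_div_assoc, ← rpow_add ha, add_sub_cancel, rpow_one]
  have hγa : γ * a ≤ m * s ^ (1 - β) := by
    rw [← div_le_iff₀ (by positivity), mul_div_assoc, ← hsplit, ← mul_assoc]
    exact (mul_le_mul_of_nonneg_left hsp (by positivity)).trans hm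
  calc a = γ⁻¹ * (γ * a) := by field_simp
    _ ≤ γ⁻¹ * (m * R ^ (1 - β)) := by
      gcongr γ⁻¹ * ?_
      exact hγa.trans (by gcongr)
    _ = γ⁻¹ * m * R ^ (1 - β) := by ring

theorem le_of_greedy_ineq_of_one_le {a p s m β γ : ℝ} (ha : 0 ≤ a) (hp : 0 ≤ p) (hp1 : p ≤ 1)
    (has : a ≤ s * p) (hβ1 : 1 ≤ β) (hγ0 : 0 < γ) (hγ1 : γ ≤ 1)
    (hm : γ * a ^ β * p ^ (1 - β) ≤ m) :
    a ≤ γ⁻¹ * m ^ (1 / β) := by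
  have hβ0 : 0 < β := one_pos.trans_le hβ1
  have hm0 : 0 ≤ m := (by positivity : 0 ≤ γ * a ^ β * p ^ (1 - β)).trans hm
  rcases hp.eq_or_lt with rfl | hp0
  · exact (by simpa using has : a ≤ 0).trans (by positivity)
  have hγa : a ^ β ≤ γ⁻¹ * m := by
    rw [le_inv_mul_iff₀ hγ0]
    calc γ * a ^ β = γ * a ^ β * 1 := (mul_one _).symm
      _ ≤ γ * a ^ β * p ^ (1 - β) := by
        gcongr
        exact one_le_rpow_of_pos_of_le_one_of_nonpos hp0 hp1 (by linarith)
      _ ≤ m := hm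
  calc a = (a ^ β) ^ (1 / β) := by rw [← rpow_mul ha, mul_one_div_cancel hβ0.ne', rpow_one]
    _ ≤ (γ⁻¹ * m) ^ (1 / β) := by gcongr
    _ = γ⁻¹ ^ (1 / β) * m ^ (1 / β) := mul_rpow (by positivity) hm0
    _ ≤ γ⁻¹ * m ^ (1 / β) := by
      gcongr
      exact rpow_le_self_of_one_le ((one_le_inv₀ hγ0).2 hγ1) ((div_le_one hβ0).2 hβ1)

theorem le_of_greedy_ineq {a p s R m β γ : ℝ} (ha : 0 ≤ a) (hp : 0 ≤ p) (hp1 : p ≤ 1)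
    (hs : 0 ≤ s) (has : a ≤ s * p) (hsR : s ≤ R) (hγ0 : 0 < γ) (hγ1 : γ ≤ 1)
    (hm : γ * a ^ β * p ^ (1 - β) ≤ m) :
    a ≤ γ⁻¹ * m ^ (1 / max 1 β) * R ^ (1 - β / max 1 β) := by
  rcases le_total β 1 with hβ1 | hβ1
  · rw [max_eq_left hβ1, div_one, div_one, rpow_one]
    exact le_of_greedy_ineq_of_le_one ha hp hs has hsR hβ1 hγ0 hm
  · rw [max_eq_right hβ1, div_self (by linarith), sub_self, rpow_zero, mul_one]
    exact le_of_greedy_ineq_of_one_le ha hp hp1 has hβ1 hγ0 hγ1 hm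

section GreedyValue

variable (Φ : Ω → H) (f : H) (β : ℝ) (x : ℕ → Ω)

-- For `hx : IsWeakGreedy Φ f β γ x`, `hx i z` reads
-- `γ * |r_i(z)| ^ β * P_{X_i}(z) ^ (1 - β) ≤ greedyValue Φ f β x i` definitionally.
noncomputable def greedyValue (i : ℕ) : ℝ :=
  |⟪f - interp Φ (Xset x i) f, Φ (x (i + 1))⟫| ^ β * powerFun Φ (Xset x i) (x (i + 1)) ^ (1 - β)

lemma greedyValue_nonneg (i : ℕ) : 0 ≤ greedyValue Φ f β x i :=
  mul_nonneg (rpow_nonneg (abs_nonneg _) _) (rpow_nonneg (powerFun_nonneg Φ _ _) _)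

lemma greedyValue_eq_zero_of_powerFun_eq_zero {i : ℕ}
    (hP : powerFun Φ (Xset x i) (x (i + 1)) = 0) : greedyValue Φ f β x i = 0 := by
  have hr : |⟪f - interp Φ (Xset x i) f, Φ (x (i + 1))⟫| = 0 := by
    have := abs_inner_le_norm_mul_powerFun (sub_interp_mem_orthogonal Φ (Xset x i) f)
      (x (i + 1))
    rw [hP, mul_zero] at this
    exact le_antisymm this (abs_nonneg _)
  rcases eq_or_ne β 0 with rfl | hβ
  · simp [greedyValue, hP]
  · simp [greedyValue, hr, zero_rpow hβ]

lemma greedyValue_eq_of_powerFun_pos {i : ℕ} (hP : 0 < powerFun Φ (Xset x i) (x (i + 1))) :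
    greedyValue Φ f β x i = (|⟪f - interp Φ (Xset x i) f, Φ (x (i + 1))⟫|
      / powerFun Φ (Xset x i) (x (i + 1))) ^ β * powerFun Φ (Xset x i) (x (i + 1)) := by
  set P := powerFun Φ (Xset x i) (x (i + 1))
  set a := |⟪f - interp Φ (Xset x i) f, Φ (x (i + 1))⟫|
  show a ^ β * P ^ (1 - β) = (a / P) ^ β * P
  conv_lhs => rw [← div_mul_cancel₀ a hP.ne']
  rw [mul_rpow (by positivity) hP.le, mul_assoc, ← rpow_add hP, add_sub_cancel, rpow_one]

end GreedyValue

theorem prod_greedyValue_le (Φ : Ω → H) (f : H) {β : ℝ} (hβ : 0 ≤ β) (x : ℕ → Ω) {n : ℕ}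
    [NeZero n] {ε : ℝ} (hε : 0 ≤ ε) (hcov : HasCover (acx (Set.range Φ)) n ε) (m : ℕ)
    (hP : ∀ k : Fin n, 0 < powerFun Φ (Xset x (m + k)) (x (m + k + 1))) :
    ∏ k : Fin n, greedyValue Φ f β x (m + k)
      ≤ ((‖f - interp Φ (Xset x m) f‖ / √n) ^ β * (√5 * √n * ε)) ^ n := by
  set P : Fin n → ℝ := fun k => powerFun Φ (Xset x (m + k)) (x (m + k + 1))
  set r := f - interp Φ (Xset x m) f
  set v : Fin n → H := fun k => ‖newtonVec Φ x (m + k)‖⁻¹ • newtonVec Φ x (m + k)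
  have hv : Orthonormal ℝ v :=
    orthonormal_normalized_newtonVec Φ x m n fun k => norm_ne_zero_iff.1 (hP k).ne'
  have hdiag : ∀ k, |⟪v k, Φ (x (m + k + 1))⟫| = P k := by
    intro k
    rw [real_inner_smul_left, inner_newtonVec_apply_self, norm_newtonVec, sq,
      inv_mul_cancel_left₀ (hP k).ne', abs_of_pos (hP k)]
  have htri : ∀ j k : Fin n, k < j → ⟪v j, Φ (x (m + k + 1))⟫ = 0 := by
    intro j k hkj
    rw [real_inner_smul_left, inner_newtonVec_apply_of_lt Φ x (by omega : m + k < m + j),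
      mul_zero]
  have hcoef : ∀ k, |⟪v k, r⟫|
      = |⟪f - interp Φ (Xset x (m + k)) f, Φ (x (m + k + 1))⟫| / P k := by
    intro k
    rw [real_inner_smul_left, inner_newtonVec_sub_interp Φ x f (Nat.le_add_right m k),
      norm_newtonVec, abs_mul, abs_inv, abs_of_pos (hP k), inv_mul_eq_div]
  have hprodP : ∏ k, P k ≤ (√5 * √n * ε) ^ n := by
    simpa only [hdiag] using
      prod_abs_inner_le_of_hasCover hε hcov (fun k => Set.mem_range_self _) hv htri
  have hprodr : ∏ k, |⟪v k, r⟫| ≤ (‖r‖ / √n) ^ n :=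
    prod_le_of_sum_sq_le (fun k => abs_nonneg _) (norm_nonneg _)
      (by simpa [sq_abs] using hv.sum_inner_products_le (s := Finset.univ) r)
  calc ∏ k : Fin n, greedyValue Φ f β x (m + k) = (∏ k, |⟪v k, r⟫|) ^ β * ∏ k, P k := by
        rw [Finset.prod_congr rfl fun k _ => greedyValue_eq_of_powerFun_pos Φ f β x (hP k),
          Finset.prod_mul_distrib, ← finsetProd_rpow _ _ fun k _ => abs_nonneg _]
        simp only [hcoef, P]
    _ ≤ ((‖r‖ / √n) ^ n) ^ β * (√5 * √n * ε) ^ n := by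
        have hr0 : 0 ≤ ∏ k, |⟪v k, r⟫| := Finset.prod_nonneg fun k _ => abs_nonneg _
        exact mul_le_mul (rpow_le_rpow hr0 hprodr hβ) hprodP
          (Finset.prod_nonneg fun k _ => (hP k).le) (by positivity)
    _ = ((‖r‖ / √n) ^ β * (√5 * √n * ε)) ^ n := by
        rw [← rpow_natCast_mul (by positivity), mul_comm (n : ℝ), rpow_mul_natCast (by positivity),
          ← mul_pow]

theorem exists_greedyValue_le (Φ : Ω → H) (f : H) {β : ℝ} (hβ : 0 ≤ β) (x : ℕ → Ω) {n : ℕ}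
    [NeZero n] {ε : ℝ} (hε : 0 ≤ ε) (hcov : HasCover (acx (Set.range Φ)) n ε) (m : ℕ) :
    ∃ k : Fin n, greedyValue Φ f β x (m + k)
      ≤ (‖f - interp Φ (Xset x m) f‖ / √n) ^ β * (√5 * √n * ε) := by
  by_cases hP : ∃ k : Fin n, powerFun Φ (Xset x (m + k)) (x (m + k + 1)) = 0
  · obtain ⟨k, hk⟩ := hP
    refine ⟨k, ?_⟩
    rw [greedyValue_eq_zero_of_powerFun_eq_zero Φ f β x hk]
    positivity
  · refine exists_le_of_prod_le_pow (fun k => greedyValue_nonneg Φ f β x _) (by positivity)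
      (prod_greedyValue_le Φ f hβ x hε hcov m fun k => ?_)
    exact (powerFun_nonneg Φ _ _).lt_of_ne fun h => hP ⟨k, h.symm⟩

theorem supNorm_sub_interp_le {Φ : Ω → H} (hΦ : ∀ z, ‖Φ z‖ ≤ 1) {f : H} {β γ : ℝ}
    (hγ0 : 0 < γ) (hγ1 : γ ≤ 1) {x : ℕ → Ω} (hx : IsWeakGreedy Φ f β γ x) (i : ℕ) {R : ℝ}
    (hR : ‖f - interp Φ (Xset x i) f‖ ≤ R) :
    supNorm Φ (f - interp Φ (Xset x i) f)
      ≤ γ⁻¹ * greedyValue Φ f β x i ^ (1 / max 1 β) * R ^ (1 - β / max 1 β) := by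
  refine Real.iSup_le (fun z => le_of_greedy_ineq (abs_nonneg _) (powerFun_nonneg Φ _ z)
    (powerFun_le_one _ hΦ z) (norm_nonneg _)
    (abs_inner_le_norm_mul_powerFun (sub_interp_mem_orthogonal Φ _ f) z) hR hγ0 hγ1 (hx i z)) ?_
  have := greedyValue_nonneg Φ f β x i
  have := (norm_nonneg _).trans hR
  positivity

theorem greedy_rate_rpow_eq {C ρ β R : ℝ} (hC : 0 ≤ C) (hR : 0 ≤ R) {n : ℕ} (hn : 0 < n) :
    ((R / √n) ^ β * (√5 * √n * (C * (n : ℝ) ^ (-ρ - 1 / 2)))) ^ (1 / max 1 β)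
        * R ^ (1 - β / max 1 β)
      = (C * √5) ^ (1 / max 1 β) * ((n : ℝ) ^ (-ρ - β / 2)) ^ (1 / max 1 β) * R := by
  have hn' : (0 : ℝ) < n := by exact_mod_cast hn
  have hbase : (R / √n) ^ β * (√5 * √n * (C * (n : ℝ) ^ (-ρ - 1 / 2)))
      = C * √5 * (n : ℝ) ^ (-ρ - β / 2) * R ^ β := by
    have e : (n : ℝ) ^ (-ρ - β / 2) = n ^ (1 / 2 : ℝ) * n ^ (-ρ - 1 / 2) / n ^ (1 / 2 * β) := by
      rw [← rpow_add hn', ← rpow_sub hn']; ring_nf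
    rw [e, div_rpow hR (sqrt_nonneg _), sqrt_eq_rpow (n : ℝ), ← rpow_mul hn'.le]
    ring
  have hexp : β * (1 / max 1 β) + (1 - β / max 1 β) = 1 := by ring
  rw [hbase, mul_rpow (by positivity) (by positivity), mul_rpow (by positivity) (by positivity),
    mul_assoc, ← rpow_mul hR, ← rpow_add' hR (by rw [hexp]; exact one_ne_zero), hexp, rpow_one]

theorem statement_7
    (Φ : Ω → H) (hΦ : ∀ z : Ω, ‖Φ z‖ ≤ 1)
    (C ρ : ℝ) (hC : 0 < C)
    (hcov : ∀ n : ℕ, 1 ≤ n →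
      HasCover (acx (Set.range Φ)) n (C * (n : ℝ) ^ (-ρ - 1 / 2)))
    (β γ : ℝ) (hβ : 0 ≤ β) (hγ0 : 0 < γ) (hγ1 : γ ≤ 1)
    (f : H) (x : ℕ → Ω) (hx : IsWeakGreedy Φ f β γ x) :
    ∀ n : ℕ, ∀ hn : 1 ≤ n,
      (Finset.Icc (n + 1) (2 * n)).inf' (Finset.nonempty_Icc.mpr (by omega))
          (fun i => supNorm Φ (f - interp Φ (Xset x i) f))
        ≤ (C * Real.sqrt 5) ^ (1 / max 1 β) * γ⁻¹
            * ((n : ℝ) ^ (-ρ - β / 2)) ^ (1 / max 1 β)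
            * ‖f - interp Φ (Xset x (n + 1)) f‖ := by
  intro n hn
  have : NeZero n := ⟨by omega⟩
  set R := ‖f - interp Φ (Xset x (n + 1)) f‖
  obtain ⟨k, hk⟩ := exists_greedyValue_le Φ f hβ x (by positivity) (hcov n hn) (n + 1)
  have hk_mem : n + 1 + k ∈ Finset.Icc (n + 1) (2 * n) := by
    have := k.isLt
    exact Finset.mem_Icc.2 ⟨by omega, by omega⟩
  calc _ ≤ supNorm Φ (f - interp Φ (Xset x (n + 1 + k)) f) := Finset.inf'_le _ hk_mem
    _ ≤ γ⁻¹ * greedyValue Φ f β x (n + 1 + k) ^ (1 / max 1 β) * R ^ (1 - β / max 1 β) :=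
        supNorm_sub_interp_le hΦ hγ0 hγ1 hx _ (norm_sub_interp_Xset_antitone Φ x f (by omega))
    _ ≤ γ⁻¹ * ((R / √n) ^ β * (√5 * √n * (C * (n : ℝ) ^ (-ρ - 1 / 2)))) ^ (1 / max 1 β)
          * R ^ (1 - β / max 1 β) := by
        gcongr
        exact greedyValue_nonneg Φ f β x _
    _ = (C * √5) ^ (1 / max 1 β) * γ⁻¹ * ((n : ℝ) ^ (-ρ - β / 2)) ^ (1 / max 1 β) * R := by
        rw [mul_assoc, greedy_rate_rpow_eq hC.le (norm_nonneg _) hn]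
        ring
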